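/- Let C be a Z2Z4-additive ACD code such that Φ(C) and Φ(C⊥) are both linear. Then for all u ∈ C and v ∈ C⊥, Φ(u+v) = Φ(u) + Φ(v). -/

import Mathlib

open Finset

/-- The ambient mixed alphabet space `Z2^α × Z4^β`. -/
abbrev Amb (α β : ℕ) := (Fin α → ZMod 2) × (Fin β → ZMod 4)

/-- The binary space `Z2^{α+2β}`, represented as `Z2^α × Z2^β × Z2^β`
(binary part, first Gray bits, second Gray bits). -/
abbrev Bin (α β : ℕ) := (Fin α → ZMod 2) × (Fin β → ZMod 2) × (Fin β → ZMod 2)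

/-- The `Z4`-valued inner product `[u,v] = 2·Σ u_i v_i + Σ u'_j v'_j`. -/
def zinner {α β : ℕ} (u v : Amb α β) : ZMod 4 :=
  2 * ∑ i, ((u.1 i).val : ZMod 4) * ((v.1 i).val : ZMod 4) + ∑ j, u.2 j * v.2 j

/-- The dual of a subset of the mixed ambient space. -/
def zdual {α β : ℕ} (C : Set (Amb α β)) : Set (Amb α β) :=
  {v | ∀ u ∈ C, zinner u v = 0}

/-- The vector `2u*v = (0 | 2u'*v')` (componentwise product; doubling kills the binary part). -/
def star2 {α β : ℕ} (u v : Amb α β) : Amb α β :=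
  (0, fun j => 2 * u.2 j * v.2 j)

/-- The usual Gray map `Z4 → Z2²`. -/
def gray (x : ZMod 4) : ZMod 2 × ZMod 2 :=
  match x.val with
  | 0 => (0, 0)
  | 1 => (0, 1)
  | 2 => (1, 1)
  | _ => (1, 0)

/-- The extended Gray map `Φ : Z2^α × Z4^β → Z2^{α+2β}`. -/
def Phi {α β : ℕ} (u : Amb α β) : Bin α β :=
  (u.1, fun j => (gray (u.2 j)).1, fun j => (gray (u.2 j)).2)

/-- The standard binary inner product on `Z2^{α+2β}`. -/
def binner {α β : ℕ} (x y : Bin α β) : ZMod 2 :=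
  ∑ i, x.1 i * y.1 i + ∑ j, x.2.1 j * y.2.1 j + ∑ j, x.2.2 j * y.2.2 j

/-- The dual of a subset of `Z2^{α+2β}`. -/
def bdual {α β : ℕ} (S : Set (Bin α β)) : Set (Bin α β) :=
  {y | ∀ x ∈ S, binner x y = 0}

/-- A subset of `Z2^{α+2β}` is a linear binary code if it is a linear subspace. -/
def IsLinear {α β : ℕ} (S : Set (Bin α β)) : Prop :=
  ∃ M : Submodule (ZMod 2) (Bin α β), ↑M = S

/-- The set `D_C = {2u*v : u ∈ C, v ∈ C⊥}`. -/
def DC {α β : ℕ} (C : Set (Amb α β)) : Set (Amb α β) :=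
  {x | ∃ u ∈ C, ∃ v ∈ zdual C, x = star2 u v}

/-- The standard binary inner product on `Z2^n`. -/
def binner2 {n : ℕ} (u v : Fin n → ZMod 2) : ZMod 2 := ∑ i, u i * v i

/-- The dual of a subset of `Z2^n`. -/
def bdual2 {n : ℕ} (C : Set (Fin n → ZMod 2)) : Set (Fin n → ZMod 2) :=
  {v | ∀ u ∈ C, binner2 u v = 0}

/-! Since `Φ(u + v + 2u*v) = Φ(u) + Φ(v)`, it suffices to show `x = 2u*v = 0`. For an additive
code `S`, linearity of `Φ(S)` means exactly that `S` is closed under `2·*·`, and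
`[w, 2u*v] = [2u*w, v]`. Taking `w ∈ C` gives `x ∈ C⊥`; taking `w ∈ C⊥` (and using the symmetry of
`2·*·`) gives `x ∈ C⊥⊥`. The characters `u ↦ exp(2πi[u, w]/4)` are all the characters of
`Z2^α × Z4^β`, so Pontryagin duality gives `C⊥⊥ = C`, and `x ∈ C ∩ C⊥ = {0}`. -/

namespace AddChar

variable {G : Type*} [AddCommGroup G] [Finite G]

lemma exists_eq_one_on_ne_one_of_notMem {H : AddSubgroup G} {a : G} (ha : a ∉ H) :
    ∃ ψ : AddChar G ℂ, (∀ h ∈ H, ψ h = 1) ∧ ψ a ≠ 1 := by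
  obtain ⟨ψ, hψ⟩ := exists_apply_ne_zero.mpr ((QuotientAddGroup.eq_zero_iff a).not.mpr ha)
  refine ⟨ψ.compAddMonoidHom (QuotientAddGroup.mk' H), fun h hh => ?_, hψ⟩
  simp [(QuotientAddGroup.eq_zero_iff h).mpr hh]

end AddChar

section

variable {α β : ℕ}

lemma zinner_comm (u v : Amb α β) : zinner u v = zinner v u := by
  simp only [zinner, mul_comm]

lemma zinner_add_left (u u' v : Amb α β) :
    zinner (u + u') v = zinner u v + zinner u' v := by
  have key : ∀ a a' b : ZMod 2, (2 : ZMod 4) * (((a + a').val : ZMod 4) * b.val)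
      = 2 * ((a.val : ZMod 4) * b.val) + 2 * ((a'.val : ZMod 4) * b.val) := by decide
  simp only [zinner, Finset.mul_sum, Prod.fst_add, Prod.snd_add, Pi.add_apply, key, add_mul,
    Finset.sum_add_distrib]
  ring

def zinnerHom (v : Amb α β) : Amb α β →+ ZMod 4 :=
  AddMonoidHom.mk' (zinner · v) fun u u' => zinner_add_left u u' v

lemma zinner_sub_right (u v v' : Amb α β) :
    zinner u (v - v') = zinner u v - zinner u v' := by
  simp only [zinner_comm u]
  exact map_sub (zinnerHom u) v v'

lemma zinner_single_fst (i : Fin α) (v : Amb α β) :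
    zinner (Pi.single i 1, 0) v = 2 * ((v.1 i).val : ZMod 4) := by
  simp [zinner, Pi.single_apply, apply_ite (fun a : ZMod 2 => (a.val : ZMod 4)), ite_mul,
    -ZMod.natCast_val, ZMod.val_one]

lemma zinner_single_snd (j : Fin β) (v : Amb α β) :
    zinner (0, Pi.single j 1) v = v.2 j := by
  simp [zinner, Pi.single_apply]

lemma eq_zero_of_forall_zinner_eq_zero {v : Amb α β} (hv : ∀ u, zinner u v = 0) : v = 0 := by
  have two_val : ∀ a : ZMod 2, 2 * (a.val : ZMod 4) = 0 → a = 0 := by decide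
  refine Prod.ext (funext fun i => two_val _ ?_) (funext fun j => ?_)
  · rw [← zinner_single_fst]; exact hv _
  · rw [← zinner_single_snd]; exact hv _

def zdualSubgroup (C : Set (Amb α β)) : AddSubgroup (Amb α β) :=
  AddSubgroup.ofSub (zdual C) ⟨0, fun u _ => by rw [← sub_self 0, zinner_sub_right, sub_self]⟩
    fun v hv v' hv' u hu => by
      rw [← sub_eq_add_neg, zinner_sub_right, hv u hu, hv' u hu, sub_self]

noncomputable def zinnerChar (v : Amb α β) : AddChar (Amb α β) ℂ :=
  ZMod.stdAddChar.compAddMonoidHom (zinnerHom v)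

lemma zinnerChar_apply (v u : Amb α β) : zinnerChar v u = ZMod.stdAddChar (zinner u v) := rfl

lemma zinnerChar_bijective : Function.Bijective (zinnerChar (α := α) (β := β)) := by
  refine (Fintype.bijective_iff_injective_and_card _).mpr
    ⟨fun v v' hvv' => ?_, AddChar.card_eq.symm⟩
  have hsame u : zinner u v = zinner u v' :=
    ZMod.injective_stdAddChar (by rw [← zinnerChar_apply, hvv', zinnerChar_apply])
  exact sub_eq_zero.mp (eq_zero_of_forall_zinner_eq_zero fun u => by
    rw [zinner_sub_right, hsame, sub_self])

lemma zdual_zdual_subset (C : AddSubgroup (Amb α β)) :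
    zdual (zdual (C : Set (Amb α β))) ⊆ C := by
  intro a ha
  by_contra haC
  obtain ⟨ψ, hψC, hψa⟩ := AddChar.exists_eq_one_on_ne_one_of_notMem haC
  obtain ⟨w, rfl⟩ := zinnerChar_bijective.2 ψ
  have hw : w ∈ zdual (C : Set (Amb α β)) := fun c hc =>
    ZMod.injective_stdAddChar (by rw [← zinnerChar_apply, hψC c hc, AddChar.map_zero_eq_one])
  exact hψa (by rw [zinnerChar_apply, zinner_comm, ha w hw, AddChar.map_zero_eq_one])

lemma gray_add_add_two_mul (a b : ZMod 4) : gray (a + b + 2 * a * b) = gray a + gray b := by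
  revert a b; decide

lemma gray_injective : Function.Injective gray := by decide

lemma Phi_add_add_star2 (u v : Amb α β) : Phi (u + v + star2 u v) = Phi u + Phi v := by
  ext j <;> simp [Phi, star2, gray_add_add_two_mul]

lemma Phi_injective : Function.Injective (Phi (α := α) (β := β)) := by
  intro u v h
  simp only [Phi, Prod.mk.injEq] at h
  obtain ⟨h1, h2, h3⟩ := h
  exact Prod.ext h1 (funext fun j => gray_injective (Prod.ext (congrFun h2 j) (congrFun h3 j)))

lemma star2_comm (u v : Amb α β) : star2 u v = star2 v u := by
  simp only [star2, mul_right_comm]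

lemma zinner_star2 (w u v : Amb α β) : zinner w (star2 u v) = zinner (star2 u w) v := by
  simp only [zinner, star2]
  congr 1
  · simp
  · exact Finset.sum_congr rfl fun j _ => by ring

lemma star2_mem_of_isLinear {S : AddSubgroup (Amb α β)}
    (hS : IsLinear (Phi '' (S : Set (Amb α β)))) {u v : Amb α β} (hu : u ∈ S) (hv : v ∈ S) :
    star2 u v ∈ S := by
  obtain ⟨M, hM⟩ := hS
  have hPhi : ∀ x ∈ S, Phi x ∈ M := fun x hx => by
    rw [← SetLike.mem_coe, hM]
    exact ⟨x, hx, rfl⟩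
  obtain ⟨c, hc, hcuv⟩ : Phi u + Phi v ∈ Phi '' S := by
    rw [← hM]
    exact M.add_mem (hPhi u hu) (hPhi v hv)
  have : c = u + v + star2 u v := Phi_injective (hcuv.trans (Phi_add_add_star2 u v).symm)
  rw [show star2 u v = c - u - v by rw [this]; abel]
  exact S.sub_mem (S.sub_mem hc hu) hv

end

/-- If `C` is ACD and `Φ(C)`, `Φ(C⊥)` are linear, then
`Φ(u+v) = Φ(u) + Φ(v)` for `u ∈ C`, `v ∈ C⊥`. -/
theorem stmt14 {α β : ℕ} (C : AddSubgroup (Amb α β))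
    (hACD : ∀ x ∈ C, x ∈ zdual (C : Set (Amb α β)) → x = 0)
    (h1 : IsLinear (Phi '' (C : Set (Amb α β))))
    (h2 : IsLinear (Phi '' zdual (C : Set (Amb α β)))) :
    ∀ u ∈ C, ∀ v ∈ zdual (C : Set (Amb α β)), Phi (u + v) = Phi u + Phi v := by
  intro u hu v hv
  have h_dual : star2 u v ∈ zdual (C : Set (Amb α β)) := fun w hw => by
    rw [zinner_star2]
    exact hv _ (star2_mem_of_isLinear h1 hu hw)
  have h_ddual : star2 u v ∈ zdual (zdual (C : Set (Amb α β))) := fun w hw => by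
    rw [star2_comm, zinner_star2, zinner_comm]
    exact star2_mem_of_isLinear (S := zdualSubgroup C) h2 hv hw u hu
  have h_zero : star2 u v = 0 := hACD _ (zdual_zdual_subset C h_ddual) h_dual
  simpa [h_zero] using Phi_add_add_star2 u v
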